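/- Let T be a bounded operator on a Banach space and λ ∈ σ(T) \ σₑ(T) (so T - λI is Fredholm but λ ∈ σ(T)). If the quasinilpotent part H₀((T ⊕ T*) - λI) is closed, then λ is an isolated point of σ(T). -/

import Mathlib

open Filter Set
open LinearMap (ker)

variable {X Y : Type*} [NormedAddCommGroup X] [NormedSpace ℂ X]
  [NormedAddCommGroup Y] [NormedSpace ℂ Y]

/-- `T` has the single-valued extension property at `l0`. -/
def HasSVEPAt (T : X →L[ℂ] X) (l0 : ℂ) : Prop :=
  ∀ U : Set ℂ, IsOpen U → l0 ∈ U → ∀ f : ℂ → X, AnalyticOnNhd ℂ f U →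
    (∀ μ ∈ U, (T - μ • (1 : X →L[ℂ] X)) (f μ) = 0) → ∀ μ ∈ U, f μ = 0

/-- Fredholm: finite-dimensional kernel, closed range of finite codimension. -/
def IsFredholmOp (T : X →L[ℂ] X) : Prop :=
  FiniteDimensional ℂ (ker (T : X →ₗ[ℂ] X)) ∧ IsClosed ((LinearMap.range (T : X →ₗ[ℂ] X) : Submodule ℂ X) : Set X) ∧
    FiniteDimensional ℂ (X ⧸ LinearMap.range (T : X →ₗ[ℂ] X))

/-- finite ascent -/
def FiniteAscent (T : X →L[ℂ] X) : Prop := ∃ n : ℕ, ker ((T ^ n : X →L[ℂ] X) : X →ₗ[ℂ] X) = ker ((T ^ (n + 1) : X →L[ℂ] X) : X →ₗ[ℂ] X)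

/-- finite descent -/
def FiniteDescent (T : X →L[ℂ] X) : Prop :=
  ∃ n : ℕ, LinearMap.range ((T ^ n : X →L[ℂ] X) : X →ₗ[ℂ] X) =
    LinearMap.range ((T ^ (n + 1) : X →L[ℂ] X) : X →ₗ[ℂ] X)

/-- essential spectrum -/
def essSpec (T : X →L[ℂ] X) : Set ℂ := {l | ¬ IsFredholmOp (T - l • 1)}

/-- Browder spectrum -/
def browderSpec (T : X →L[ℂ] X) : Set ℂ :=
  {l | ¬ (IsFredholmOp (T - l • 1) ∧ FiniteAscent (T - l • 1) ∧ FiniteDescent (T - l • 1))}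

/-- the Banach-space dual (adjoint) operator -/
noncomputable def dualOp (T : X →L[ℂ] X) :
    StrongDual ℂ X →L[ℂ] StrongDual ℂ X :=
  (ContinuousLinearMap.compSL X X ℂ (RingHom.id ℂ) (RingHom.id ℂ)).flip T

/-- quasinilpotent part -/
def quasinilpotentPart (S : Y →L[ℂ] Y) : Set Y :=
  {x | Tendsto (fun n : ℕ => ‖(S ^ n) x‖ ^ (1 / (n : ℝ))) atTop (nhds 0)}

/-!
Put `A = T - l`. Closedness of `H₀(A ⊕ A*)` makes `H₀(A)` and `H₀(A*)` closed, and both `A` and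
`A*` are bounded below on a closed subspace `W` of finite codimension. For such an operator `B`,
every closed subspace `V ⊆ H₀(B)` is finite-dimensional: Banach–Steinhaus gives
`‖Bⁿx‖ ≤ M εⁿ ‖x‖` uniformly on `V`, and iterating the lower bound on `W` shows that no nonzero
`x ∈ V` has `x, Bx, …, Bᴺ⁻¹x ∈ W` once `N` is large, a condition of finite codimension. Hence the
kernels of the powers of `A` and of `A*` stabilise, and by duality the ranges of the powers of `A`
stabilise too: `l` lies outside the Browder spectrum. Then `X = ker Aᵐ ⊕ range Aᵐ`, with `A`
nilpotent on the first summand and invertible on the second (closed) one, so `A - μ` is invertible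
for all small `μ ≠ 0`.
-/
open Asymptotics Topology

section QuasinilpotentPart

variable {E : Type*} [NormedAddCommGroup E] [NormedSpace ℂ E]

theorem mem_quasinilpotentPart_iff_eventually_le (S : E →L[ℂ] E) (x : E) :
    x ∈ quasinilpotentPart S ↔ ∀ ε > 0, ∀ᶠ n : ℕ in atTop, ‖(S ^ n) x‖ ≤ ε ^ n := by
  have root_le_iff : ∀ ε > (0 : ℝ), ∀ n : ℕ, n ≠ 0 →
      (‖(S ^ n) x‖ ^ (1 / (n : ℝ)) ≤ ε ↔ ‖(S ^ n) x‖ ≤ ε ^ n) := fun ε hε n hn => by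
    rw [one_div, Real.rpow_inv_le_iff_of_pos (norm_nonneg _) hε.le (by positivity),
      Real.rpow_natCast]
  refine ⟨fun h ε hε => ?_, fun h => tendsto_order.2 ⟨fun a ha => .of_forall fun n =>
    ha.trans_le (by positivity), fun a ha => ?_⟩⟩
  · filter_upwards [h.eventually (ge_mem_nhds hε), eventually_ne_atTop 0] with n hle hn
    exact (root_le_iff ε hε n hn).1 hle
  · filter_upwards [h (a / 2) (by positivity), eventually_ne_atTop 0] with n hle hn
    exact ((root_le_iff _ (by positivity) n hn).2 hle).trans_lt (half_lt_self ha)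

theorem mem_quasinilpotentPart_iff_isBigO (S : E →L[ℂ] E) (x : E) :
    x ∈ quasinilpotentPart S ↔
      ∀ ε : ℝ, 0 < ε → (fun n : ℕ => (S ^ n) x) =O[atTop] (fun n => ε ^ n) := by
  rw [mem_quasinilpotentPart_iff_eventually_le]
  refine ⟨fun h ε hε => ?_, fun h ε hε => ?_⟩
  · refine (IsBigO.of_bound 1 ?_).trans
      (isLittleO_pow_pow_of_lt_left (half_pos hε).le (half_lt_self hε)).isBigO
    filter_upwards [h (ε / 2) (half_pos hε)] with n hn
    rwa [one_mul, Real.norm_of_nonneg (by positivity)]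
  · filter_upwards [((h (ε / 2) (half_pos hε)).trans_isLittleO
      (isLittleO_pow_pow_of_lt_left (half_pos hε).le (half_lt_self hε))).bound one_pos] with n hn
    rwa [one_mul, Real.norm_of_nonneg (by positivity)] at hn

def quasinilpotentSubmodule (S : E →L[ℂ] E) : Submodule ℂ E where
  carrier := quasinilpotentPart S
  zero_mem' := (mem_quasinilpotentPart_iff_isBigO S 0).2 fun _ _ => by
    simpa using isBigO_zero _ _
  add_mem' {x y} hx hy := (mem_quasinilpotentPart_iff_isBigO S _).2 fun ε hε => by
    simpa using ((mem_quasinilpotentPart_iff_isBigO S x).1 hx ε hε).add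
      ((mem_quasinilpotentPart_iff_isBigO S y).1 hy ε hε)
  smul_mem' c x hx := (mem_quasinilpotentPart_iff_isBigO S _).2 fun ε hε =>
    (((mem_quasinilpotentPart_iff_isBigO S x).1 hx ε hε).const_smul_left c).congr_left
      fun n => (map_smul _ c x).symm

theorem ker_pow_le_quasinilpotentSubmodule (S : E →L[ℂ] E) (k : ℕ) :
    ker ((S ^ k : E →L[ℂ] E) : E →ₗ[ℂ] E) ≤ quasinilpotentSubmodule S := by
  intro x hx
  refine (mem_quasinilpotentPart_iff_eventually_le S x).2 fun ε hε => ?_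
  filter_upwards [eventually_ge_atTop k] with n hn
  have hx : (S ^ k) x = 0 := hx
  rw [← Nat.sub_add_cancel hn, pow_add, mul_apply_eq_comp, hx, map_zero, norm_zero]
  positivity

end QuasinilpotentPart

section ProdMap

variable {E F : Type*} [NormedAddCommGroup E] [NormedSpace ℂ E] [NormedAddCommGroup F]
  [NormedSpace ℂ F]

theorem ContinuousLinearMap.prodMap_sub_smul_one (S : E →L[ℂ] E) (S' : F →L[ℂ] F) (l : ℂ) :
    S.prodMap S' - l • 1 = (S - l • 1).prodMap (S' - l • 1) := by
  ext <;> simp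

theorem isClosed_quasinilpotentPart_left_of_prodMap {S : E →L[ℂ] E} {S' : F →L[ℂ] F}
    (h : IsClosed (quasinilpotentPart (S.prodMap S'))) : IsClosed (quasinilpotentPart S) := by
  have : quasinilpotentPart S = (fun x => (x, 0)) ⁻¹' quasinilpotentPart (S.prodMap S') := by
    ext x
    simp [quasinilpotentPart]
  rw [this]
  exact h.preimage (by fun_prop)

theorem isClosed_quasinilpotentPart_right_of_prodMap {S : E →L[ℂ] E} {S' : F →L[ℂ] F}
    (h : IsClosed (quasinilpotentPart (S.prodMap S'))) : IsClosed (quasinilpotentPart S') := by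
  have : quasinilpotentPart S' = (fun y => (0, y)) ⁻¹' quasinilpotentPart (S.prodMap S') := by
    ext y
    simp [quasinilpotentPart]
  rw [this]
  exact h.preimage (by fun_prop)

end ProdMap

theorem Submodule.CoFG.comap {R M N : Type*} [Ring R] [IsNoetherianRing R] [AddCommGroup M]
    [Module R M] [AddCommGroup N] [Module R N] {W : Submodule R N} (hW : W.CoFG)
    (f : M →ₗ[R] N) : (W.comap f).CoFG := by
  rw [← W.ker_mkQ, ← LinearMap.ker_comp]
  exact Submodule.CoFG.ker _

section BoundedBelow

variable {E F G : Type*} [NormedAddCommGroup E] [NormedSpace ℂ E] [NormedAddCommGroup F]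
  [NormedSpace ℂ F] [NormedAddCommGroup G] [NormedSpace ℂ G]

/-- Between Banach spaces this characterises the upper semi-Fredholm operators. -/
def IsBoundedBelowOnFiniteCodim (B : E →L[ℂ] F) : Prop :=
  ∃ W : Submodule ℂ E, IsClosed (W : Set E) ∧ W.CoFG ∧ ∃ C > 0, ∀ x ∈ W, ‖x‖ ≤ C * ‖B x‖

namespace IsBoundedBelowOnFiniteCodim

theorem comp {B : F →L[ℂ] G} {B' : E →L[ℂ] F} (hB : IsBoundedBelowOnFiniteCodim B)
    (hB' : IsBoundedBelowOnFiniteCodim B') : IsBoundedBelowOnFiniteCodim (B.comp B') := by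
  obtain ⟨W, hWc, hW, C, hC, hCW⟩ := hB
  obtain ⟨W', hW'c, hW', C', hC', hC'W'⟩ := hB'
  refine ⟨W' ⊓ W.comap (B' : E →ₗ[ℂ] F), hW'c.inter (hWc.preimage B'.continuous),
    hW'.inf (hW.comap _), C' * C, by positivity, fun x hx => ?_⟩
  calc ‖x‖ ≤ C' * ‖B' x‖ := hC'W' x hx.1
    _ ≤ C' * (C * ‖B (B' x)‖) := by gcongr; exact hCW _ hx.2
    _ = C' * C * ‖(B.comp B') x‖ := by rw [mul_assoc]; rfl

theorem pow {B : E →L[ℂ] E} (hB : IsBoundedBelowOnFiniteCodim B) :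
    ∀ n : ℕ, IsBoundedBelowOnFiniteCodim (B ^ n)
  | 0 => ⟨⊤, isClosed_univ, .top, 1, one_pos, fun x _ => by simp⟩
  | n + 1 => by
    rw [pow_succ, ContinuousLinearMap.mul_def]
    exact (hB.pow n).comp hB

theorem isClosed_range [CompleteSpace E] {B : E →L[ℂ] F} (hB : IsBoundedBelowOnFiniteCodim B) :
    IsClosed (LinearMap.range (B : E →ₗ[ℂ] F) : Set F) := by
  obtain ⟨W, hWc, hW, C, -, hCW⟩ := hB
  have : CompleteSpace W := hWc.completeSpace_coe
  have hanti : AntilipschitzWith C.toNNReal (B.domRestrict W) :=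
    ContinuousLinearMap.antilipschitz_of_bound _ fun x =>
      (hCW x x.2).trans (mul_le_mul_of_nonneg_right (Real.le_coe_toNNReal C) (norm_nonneg _))
  have hunif := (B.domRestrict W).uniformContinuous
  exact ((B.isStrictMap_isClosed_range_iff_restrict W hWc).2
    ⟨(hanti.isUniformEmbedding hunif).isEmbedding.isStrictMap, hanti.isClosed_range hunif⟩).2

end IsBoundedBelowOnFiniteCodim

theorem isBoundedBelowOnFiniteCodim_of_finiteDimensional_ker [CompleteSpace E] [CompleteSpace F]
    (B : E →L[ℂ] F) [FiniteDimensional ℂ (ker (B : E →ₗ[ℂ] F))]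
    (hrange : IsClosed (LinearMap.range (B : E →ₗ[ℂ] F) : Set F)) :
    IsBoundedBelowOnFiniteCodim B := by
  obtain ⟨W, hWc, hcompl⟩ := (Submodule.ClosedComplemented.of_finiteDimensional
    (ker (B : E →ₗ[ℂ] F))).exists_isClosed_isCompl
  have : CompleteSpace W := hWc.completeSpace_coe
  have hinj : Function.Injective (B.domRestrict W) :=
    (injective_iff_map_eq_zero _).2 fun w hw =>
      Subtype.ext (Submodule.disjoint_def.1 hcompl.disjoint w hw w.2)
  have hrange' : Set.range (B.domRestrict W) = LinearMap.range (B : E →ₗ[ℂ] F) := by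
    refine Set.Subset.antisymm (Set.range_subset_iff.2 fun w => ⟨w, rfl⟩) ?_
    rintro _ ⟨x, rfl⟩
    obtain ⟨k, hk, w, hw, rfl⟩ :=
      Submodule.mem_sup.1 (hcompl.codisjoint.eq_top ▸ Submodule.mem_top (x := x))
    exact ⟨⟨w, hw⟩, by simp [show B k = 0 from hk]⟩
  obtain ⟨K, hK⟩ := (B.domRestrict W).antilipschitz_of_injective_of_isClosed_range hinj
    (hrange' ▸ hrange)
  refine ⟨W, hWc, (Submodule.FG.cofg_of_isCompl hcompl (Module.Finite.iff_fg.1 inferInstance)),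
    K + 1, by positivity, fun x hx => ?_⟩
  calc ‖x‖ ≤ K * ‖B x‖ := ZeroHomClass.bound_of_antilipschitz _ hK ⟨x, hx⟩
    _ ≤ (K + 1) * ‖B x‖ := by gcongr; linarith

theorem isBoundedBelowOnFiniteCodim_dualOp [CompleteSpace E] (B : E →L[ℂ] E)
    [FiniteDimensional ℂ (E ⧸ LinearMap.range (B : E →ₗ[ℂ] E))] :
    IsBoundedBelowOnFiniteCodim (dualOp B) := by
  obtain ⟨Q, hQ⟩ := (LinearMap.range (B : E →ₗ[ℂ] E)).exists_isCompl
  have : FiniteDimensional ℂ Q :=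
    Module.Finite.iff_fg.2 (Submodule.CoFG.fg_of_isCompl hQ inferInstance)
  let Φ : E × Q →L[ℂ] E := B.coprod Q.subtypeL
  have hΦ : Function.Surjective Φ := by
    intro x
    obtain ⟨_, ⟨v, rfl⟩, q, hq, rfl⟩ :=
      Submodule.mem_sup.1 (hQ.codisjoint.eq_top ▸ Submodule.mem_top (x := x))
    exact ⟨(v, ⟨q, hq⟩), rfl⟩
  obtain ⟨C, hC, hCΦ⟩ := Φ.exists_preimage_norm_le hΦ
  let ρ : StrongDual ℂ E →L[ℂ] StrongDual ℂ Q :=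
    (ContinuousLinearMap.compL ℂ Q E ℂ).flip Q.subtypeL
  refine ⟨ker (ρ : StrongDual ℂ E →ₗ[ℂ] StrongDual ℂ Q), ρ.isClosed_ker, Submodule.CoFG.ker _,
    C, hC, fun g hg => g.opNorm_le_bound (by positivity) fun x => ?_⟩
  obtain ⟨⟨v, q⟩, rfl, hvq⟩ := hCΦ x
  have hgq : g q = 0 := DFunLike.congr_fun (show ρ g = 0 from hg) q
  calc ‖g (Φ (v, q))‖ = ‖dualOp B g v‖ := by simp [Φ, hgq, dualOp]
    _ ≤ ‖dualOp B g‖ * ‖v‖ := (dualOp B g).le_opNorm v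
    _ ≤ ‖dualOp B g‖ * (C * ‖Φ (v, q)‖) := by gcongr; exact (norm_fst_le _).trans hvq
    _ = C * ‖dualOp B g‖ * ‖Φ (v, q)‖ := by ring

end BoundedBelow

section FiniteAscent

variable {E : Type*} [NormedAddCommGroup E] [NormedSpace ℂ E]

theorem exists_norm_pow_apply_le_of_subset_quasinilpotentPart [CompleteSpace E] (S : E →L[ℂ] E)
    {V : Submodule ℂ E} (hV : IsClosed (V : Set E)) (hVS : (V : Set E) ⊆ quasinilpotentPart S)
    {ε : ℝ} (hε : 0 < ε) : ∃ M, ∀ n : ℕ, ∀ x ∈ V, ‖(S ^ n) x‖ ≤ M * ε ^ n * ‖x‖ := by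
  have : CompleteSpace V := hV.completeSpace_coe
  let g : ℕ → V →L[ℂ] E := fun n => ((ε : ℂ)⁻¹ ^ n) • (S ^ n).comp V.subtypeL
  have hg : ∀ n (x : V), ‖(S ^ n) x‖ = ε ^ n * ‖g n x‖ := fun n x => by
    simp [g, norm_smul, abs_of_pos hε, hε.ne']
  obtain ⟨M, hM⟩ := banach_steinhaus (g := g) fun x => by
    obtain ⟨C, hC⟩ := (isBigO_nat_atTop_iff fun n h => absurd h (pow_ne_zero n hε.ne')).1
      ((mem_quasinilpotentPart_iff_isBigO S x).1 (hVS x.2) ε hε)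
    refine ⟨C, fun n => le_of_mul_le_mul_left ?_ (pow_pos hε n)⟩
    simpa [← hg, Real.norm_of_nonneg (pow_pos hε n).le, mul_comm] using hC n
  refine ⟨M, fun n x hx => ?_⟩
  calc ‖(S ^ n) x‖ = ε ^ n * ‖g n ⟨x, hx⟩‖ := hg n ⟨x, hx⟩
    _ ≤ ε ^ n * (M * ‖x‖) := by gcongr; exact (g n).le_of_opNorm_le (hM n) _
    _ = M * ε ^ n * ‖x‖ := by ring

theorem norm_le_pow_mul_norm_pow_apply {B : E →L[ℂ] E} {W : Set E} {C : ℝ} (hC : 0 ≤ C)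
    (hCW : ∀ x ∈ W, ‖x‖ ≤ C * ‖B x‖) {x : E} :
    ∀ n : ℕ, (∀ j < n, (B ^ j) x ∈ W) → ‖x‖ ≤ C ^ n * ‖(B ^ n) x‖
  | 0, _ => by simp
  | n + 1, hx =>
    calc ‖x‖ ≤ C ^ n * ‖(B ^ n) x‖ :=
          norm_le_pow_mul_norm_pow_apply hC hCW n fun j hj => hx j (by omega)
      _ ≤ C ^ n * (C * ‖B ((B ^ n) x)‖) := by gcongr; exact hCW _ (hx n n.lt_succ_self)
      _ = C ^ (n + 1) * ‖(B ^ (n + 1)) x‖ := by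
        rw [pow_succ' B n, mul_apply_eq_comp, pow_succ C]; ring

namespace IsBoundedBelowOnFiniteCodim

theorem finiteDimensional_of_subset_quasinilpotentPart [CompleteSpace E] {B : E →L[ℂ] E}
    (hB : IsBoundedBelowOnFiniteCodim B) {V : Submodule ℂ E} (hV : IsClosed (V : Set E))
    (hVB : (V : Set E) ⊆ quasinilpotentPart B) : FiniteDimensional ℂ V := by
  obtain ⟨W, -, hW, C, hC, hCW⟩ := hB
  obtain ⟨M, hM⟩ :=
    exists_norm_pow_apply_le_of_subset_quasinilpotentPart B hV hVB (ε := (2 * C)⁻¹) (by positivity)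
  obtain ⟨N, hN⟩ : ∃ N : ℕ, M * (1 / 2) ^ N < 1 :=
    (((tendsto_pow_atTop_nhds_zero_of_lt_one (by norm_num) (by norm_num)).const_mul M).eventually
      (gt_mem_nhds (by norm_num : M * (0 : ℝ) < 1))).exists
  let K : Submodule ℂ E := ⨅ j : Fin N, W.comap ((B ^ (j : ℕ) : E →L[ℂ] E) : E →ₗ[ℂ] E)
  have hK : K.CoFG :=
    Submodule.CoFG.sInf_of_finite (Set.finite_range _) (by rintro _ ⟨j, rfl⟩; exact hW.comap _)
  refine Module.Finite.iff_fg.2 (hK.fg_of_disjoint (Submodule.disjoint_def.2 fun x hxV hxK => ?_))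
  have hxW : ∀ j < N, (B ^ j) x ∈ W := fun j hj => (Submodule.mem_iInf _).1 hxK ⟨j, hj⟩
  have hx : ‖x‖ ≤ M * (1 / 2) ^ N * ‖x‖ :=
    calc ‖x‖ ≤ C ^ N * ‖(B ^ N) x‖ := norm_le_pow_mul_norm_pow_apply hC.le hCW N hxW
      _ ≤ C ^ N * (M * (2 * C)⁻¹ ^ N * ‖x‖) := by gcongr; exact hM N x hxV
      _ = M * (1 / 2) ^ N * ‖x‖ := by
        rw [← mul_assoc, mul_comm (C ^ N), mul_assoc M, ← mul_pow]; field_simp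
  by_contra hx0
  nlinarith [norm_pos_iff.2 hx0]

theorem finiteAscent_of_isClosed_quasinilpotentPart [CompleteSpace E] {B : E →L[ℂ] E}
    (hB : IsBoundedBelowOnFiniteCodim B) (hH : IsClosed (quasinilpotentPart B)) :
    FiniteAscent B := by
  let V := quasinilpotentSubmodule B
  have : FiniteDimensional ℂ V := hB.finiteDimensional_of_subset_quasinilpotentPart hH subset_rfl
  let kerInV : ℕ →o Submodule ℂ V :=
    ⟨fun n => ((B : E →ₗ[ℂ] E).iterateKer n).comap V.subtype,
      fun _ _ h => Submodule.comap_mono ((B : E →ₗ[ℂ] E).iterateKer.mono h)⟩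
  obtain ⟨n, hn⟩ := monotone_stabilizes_iff_noetherian.2 inferInstance kerInV
  have hmap : ∀ m, ker ((B ^ m : E →L[ℂ] E) : E →ₗ[ℂ] E) = (kerInV m).map V.subtype := fun m => by
    change _ = ((ker ((B : E →ₗ[ℂ] E) ^ m)).comap V.subtype).map V.subtype
    rw [Submodule.map_comap_subtype, ← ContinuousLinearMap.toLinearMap_pow,
      inf_eq_right.2 (ker_pow_le_quasinilpotentSubmodule B m)]
  exact ⟨n, by rw [hmap, hmap, hn (n + 1) n.le_succ]⟩

end IsBoundedBelowOnFiniteCodim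

end FiniteAscent

section Duality

variable {E : Type*} [NormedAddCommGroup E] [NormedSpace ℂ E]

theorem dualOp_pow_apply (B : E →L[ℂ] E) (n : ℕ) (g : StrongDual ℂ E) :
    (dualOp B ^ n) g = g.comp (B ^ n) := by
  induction n generalizing g with
  | zero => rfl
  | succ n ih =>
    rw [pow_succ (dualOp B), mul_apply_eq_comp, ih, pow_succ' B]
    rfl

theorem dualOp_sub_smul_one (T : E →L[ℂ] E) (l : ℂ) :
    dualOp (T - l • 1) = dualOp T - l • (1 : StrongDual ℂ E →L[ℂ] StrongDual ℂ E) := by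
  rw [dualOp, map_sub, map_smul]
  rfl

theorem finiteDescent_of_finiteAscent_dualOp (B : E →L[ℂ] E)
    (hclosed : ∀ n, IsClosed (LinearMap.range ((B ^ n : E →L[ℂ] E) : E →ₗ[ℂ] E) : Set E))
    (h : FiniteAscent (dualOp B)) : FiniteDescent B := by
  obtain ⟨n, hn⟩ := h
  refine ⟨n, le_antisymm ?_ ?_⟩
  · rintro _ ⟨x, rfl⟩
    by_contra hx
    set R := LinearMap.range ((B ^ (n + 1) : E →L[ℂ] E) : E →ₗ[ℂ] E)
    -- the quotient `E ⧸ R` is a normed space only once `R` is known to be closed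
    have : IsClosed (R : Set E) := hclosed (n + 1)
    obtain ⟨f, hf⟩ := SeparatingDual.exists_ne_zero (R := ℂ)
      (mt (Submodule.Quotient.mk_eq_zero R).1 hx)
    let g : StrongDual ℂ E := f.comp R.mkQL
    have hg : g ∈ ker ((dualOp B ^ (n + 1) : _ →L[ℂ] _) : StrongDual ℂ E →ₗ[ℂ] StrongDual ℂ E) := by
      rw [LinearMap.mem_ker, ContinuousLinearMap.coe_coe, dualOp_pow_apply]
      refine ContinuousLinearMap.ext fun y => ?_
      change f (R.mkQ ((B ^ (n + 1)) y)) = 0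
      have hy : (B ^ (n + 1)) y ∈ R := ⟨y, rfl⟩
      rw [Submodule.mkQ_apply, (Submodule.Quotient.mk_eq_zero R).2 hy, map_zero]
    rw [← hn, LinearMap.mem_ker, ContinuousLinearMap.coe_coe, dualOp_pow_apply] at hg
    exact hf (DFunLike.congr_fun hg x)
  · rw [pow_succ, ContinuousLinearMap.mul_def, ContinuousLinearMap.toLinearMap_comp]
    exact LinearMap.range_comp_le_range _ _

end Duality

section FittingDecomposition

open Module.End

section Semiring

variable {R M : Type*} [Semiring R] [AddCommMonoid M] [Module R M]

theorem Module.End.range_pow_constant {f : Module.End R M} {k : ℕ}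
    (h : LinearMap.range (f ^ k) = LinearMap.range (f ^ (k + 1))) :
    ∀ m, LinearMap.range (f ^ k) = LinearMap.range (f ^ (k + m))
  | 0 => rfl
  | m + 1 => by
    rw [range_pow_constant h m, show k + (m + 1) = m + (k + 1) by omega, add_comm k m,
      pow_add, pow_add, mul_eq_comp, mul_eq_comp, LinearMap.range_comp, LinearMap.range_comp, h]

theorem Module.End.range_pow_succ_eq_of_le {f : Module.End R M} {q m : ℕ}
    (h : LinearMap.range (f ^ q) = LinearMap.range (f ^ (q + 1))) (hm : q ≤ m) :
    LinearMap.range (f ^ m) = LinearMap.range (f ^ (m + 1)) := by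
  obtain ⟨k, rfl⟩ := Nat.exists_eq_add_of_le hm
  rw [← range_pow_constant h, add_assoc, ← range_pow_constant h]

theorem Module.End.mapsTo_ker_pow (f : Module.End R M) (m : ℕ) :
    ∀ x ∈ ker (f ^ m), f x ∈ ker (f ^ m) := fun x hx => by
  rw [LinearMap.mem_ker, ← mul_apply, ← pow_succ, pow_succ', mul_apply, hx, map_zero]

theorem Module.End.mapsTo_range_pow (f : Module.End R M) (m : ℕ) :
    ∀ x ∈ LinearMap.range (f ^ m), f x ∈ LinearMap.range (f ^ m) := by
  rintro _ ⟨y, rfl⟩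
  exact ⟨f y, by rw [← mul_apply, ← pow_succ, pow_succ', mul_apply]⟩

theorem Module.End.isNilpotent_restrict_ker_pow (f : Module.End R M) (m : ℕ) :
    IsNilpotent (f.restrict (f.mapsTo_ker_pow m)) :=
  ⟨m, LinearMap.ext fun x => Subtype.ext <| by rw [pow_restrict]; exact x.2⟩

end Semiring

theorem Module.End.bijective_of_isCompl_of_bijective_restrict {R M : Type*} [Ring R]
    [AddCommGroup M] [Module R M] {f : Module.End R M} {p q : Submodule R M} (h : IsCompl p q)
    (hp : ∀ x ∈ p, f x ∈ p) (hq : ∀ x ∈ q, f x ∈ q) (hfp : Function.Bijective (f.restrict hp))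
    (hfq : Function.Bijective (f.restrict hq)) : Function.Bijective f := by
  let e := Submodule.prodEquivOfIsCompl p q h
  have hconj : ⇑f = e ∘ Prod.map (f.restrict hp) (f.restrict hq) ∘ e.symm := by
    funext x
    obtain ⟨⟨a, b⟩, rfl⟩ := e.surjective x
    simp [e, LinearMap.restrict_apply]
  rw [hconj]
  exact e.bijective.comp ((hfp.prodMap hfq).comp e.symm.bijective)

variable {K V : Type*} [Field K] [AddCommGroup V] [Module K V]

theorem Module.End.ker_pow_succ_eq_of_le {f : Module.End K V} {p m : ℕ}
    (h : ker (f ^ p) = ker (f ^ (p + 1))) (hm : p ≤ m) : ker (f ^ m) = ker (f ^ (m + 1)) := by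
  obtain ⟨k, rfl⟩ := Nat.exists_eq_add_of_le hm
  rw [← ker_pow_constant h, add_assoc, ← ker_pow_constant h]

theorem Module.End.isCompl_ker_pow_range_pow {f : Module.End K V} {m : ℕ}
    (hker : ker (f ^ m) = ker (f ^ (m + 1)))
    (hrange : LinearMap.range (f ^ m) = LinearMap.range (f ^ (m + 1))) :
    IsCompl (ker (f ^ m)) (LinearMap.range (f ^ m)) := by
  have hker2 := ker_pow_constant hker m
  have hrange2 := range_pow_constant hrange m
  refine ⟨Submodule.disjoint_def.2 ?_, codisjoint_iff.2 (Submodule.eq_top_iff'.2 fun x => ?_)⟩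
  · rintro _ hx ⟨y, rfl⟩
    have hy : y ∈ ker (f ^ (m + m)) := by rwa [LinearMap.mem_ker, pow_add, mul_apply]
    rwa [← hker2] at hy
  · obtain ⟨z, hz⟩ : (f ^ m) x ∈ LinearMap.range (f ^ (m + m)) :=
      hrange2 ▸ LinearMap.mem_range_self _ x
    refine Submodule.mem_sup.2 ⟨x - (f ^ m) z, ?_, (f ^ m) z, LinearMap.mem_range_self _ z,
      sub_add_cancel _ _⟩
    rw [LinearMap.mem_ker, map_sub, ← hz, pow_add, mul_apply, sub_self]

theorem Module.End.bijective_restrict_range_pow {f : Module.End K V} {m : ℕ}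
    (hker : ker (f ^ m) = ker (f ^ (m + 1)))
    (hrange : LinearMap.range (f ^ m) = LinearMap.range (f ^ (m + 1))) :
    Function.Bijective (f.restrict (f.mapsTo_range_pow m)) := by
  refine ⟨(injective_iff_map_eq_zero _).2 fun x hx => Subtype.ext ?_, fun x => ?_⟩
  · have hfx : f x = 0 := congrArg Subtype.val hx
    have hxker : (x : V) ∈ ker (f ^ m) := by
      rw [hker, LinearMap.mem_ker, pow_succ, mul_apply, hfx, map_zero]
    exact Submodule.disjoint_def.1 (isCompl_ker_pow_range_pow hker hrange).disjoint _ hxker x.2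
  · obtain ⟨y, hy⟩ : (x : V) ∈ LinearMap.range (f ^ (m + 1)) := hrange ▸ x.2
    exact ⟨⟨(f ^ m) y, LinearMap.mem_range_self _ y⟩,
      Subtype.ext (by rw [← hy, pow_succ', mul_apply]; rfl)⟩

theorem Module.End.spectrum_subset_union_restrict (f : Module.End K V) {p q : Submodule K V}
    (h : IsCompl p q) (hp : ∀ x ∈ p, f x ∈ p) (hq : ∀ x ∈ q, f x ∈ q) :
    spectrum K f ⊆ spectrum K (f.restrict hp) ∪ spectrum K (f.restrict hq) := by
  intro μ hμ
  by_contra hμpq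
  simp only [Set.mem_union, not_or, spectrum.notMem_iff, isUnit_iff] at hμpq
  rw [spectrum.mem_iff] at hμ
  refine hμ ((isUnit_iff _).2 (bijective_of_isCompl_of_bijective_restrict h
    (fun x hx => sub_mem (Submodule.smul_mem _ μ hx) (hp x hx))
    (fun x hx => sub_mem (Submodule.smul_mem _ μ hx) (hq x hx)) ?_ ?_))
  · convert hμpq.1 using 1
    ext x
    simp [Module.algebraMap_end_apply]
  · convert hμpq.2 using 1
    ext x
    simp [Module.algebraMap_end_apply]

end FittingDecomposition

theorem IsNilpotent.spectrum_subset_singleton_zero {K A : Type*} [Field K] [Ring A]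
    [Algebra K A] {a : A} (ha : IsNilpotent a) : spectrum K a ⊆ {0} := by
  intro μ hμ
  by_contra hμ0
  rw [spectrum.mem_iff, sub_eq_add_neg] at hμ
  exact hμ (ha.neg.isUnit_add_left_of_commute ((Ne.isUnit hμ0).map _)
    (Algebra.commute_algebraMap_right μ _))

section Isolated

variable {E : Type*} [NormedAddCommGroup E] [NormedSpace ℂ E]

theorem eventually_notMem_spectrum_of_ker_pow_eq_of_range_pow_eq [CompleteSpace E]
    (A : E →L[ℂ] E) {m : ℕ}
    (hker : ker ((A : Module.End ℂ E) ^ m) = ker ((A : Module.End ℂ E) ^ (m + 1)))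
    (hrange : LinearMap.range ((A : Module.End ℂ E) ^ m) =
      LinearMap.range ((A : Module.End ℂ E) ^ (m + 1)))
    (hclosed : IsClosed (LinearMap.range ((A : Module.End ℂ E) ^ m) : Set E)) :
    ∀ᶠ μ in 𝓝[≠] 0, μ ∉ spectrum ℂ A := by
  set f : Module.End ℂ E := (A : E →ₗ[ℂ] E)
  have : CompleteSpace (LinearMap.range (f ^ m)) := hclosed.completeSpace_coe
  let AR := A.restrict (f.mapsTo_range_pow m)
  have hAR : 0 ∉ spectrum ℂ AR := by
    rw [spectrum.zero_notMem_iff, ContinuousLinearMap.isUnit_iff_bijective]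
    exact f.bijective_restrict_range_pow hker hrange
  have hsub := f.spectrum_subset_union_restrict (Module.End.isCompl_ker_pow_range_pow hker hrange)
    (f.mapsTo_ker_pow m) (f.mapsTo_range_pow m)
  have hopen : (spectrum ℂ AR)ᶜ ∈ 𝓝 0 := (spectrum.isClosed (𝕜 := ℂ) AR).isOpen_compl.mem_nhds hAR
  filter_upwards [nhdsWithin_le_nhds hopen, self_mem_nhdsWithin] with μ hμR hμ0 hμ
  rw [ContinuousLinearMap.spectrum_eq] at hμ
  rcases hsub hμ with hN | hR
  · exact hμ0 ((f.isNilpotent_restrict_ker_pow m).spectrum_subset_singleton_zero hN)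
  · exact hμR (by rwa [ContinuousLinearMap.spectrum_eq, ContinuousLinearMap.toLinearMap_restrict])

end Isolated

section Browder

variable {E : Type*} [NormedAddCommGroup E] [NormedSpace ℂ E] [CompleteSpace E]

theorem IsFredholmOp.isBoundedBelowOnFiniteCodim {A : E →L[ℂ] E} (hA : IsFredholmOp A) :
    IsBoundedBelowOnFiniteCodim A :=
  have := hA.1
  isBoundedBelowOnFiniteCodim_of_finiteDimensional_ker A hA.2.1

theorem IsFredholmOp.isBoundedBelowOnFiniteCodim_dualOp {A : E →L[ℂ] E} (hA : IsFredholmOp A) :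
    IsBoundedBelowOnFiniteCodim (dualOp A) :=
  have := hA.2.2
  _root_.isBoundedBelowOnFiniteCodim_dualOp A

open scoped Pointwise in
theorem not_accPt_spectrum_of_notMem_browderSpec {T : E →L[ℂ] E} {l : ℂ}
    (h : l ∉ browderSpec T) : ¬ AccPt l (𝓟 (spectrum ℂ T)) := by
  obtain ⟨hF, ⟨p, hp⟩, ⟨q, hq⟩⟩ := not_not.1 h
  have hclosed := (hF.isBoundedBelowOnFiniteCodim.pow (max p q)).isClosed_range
  simp only [ContinuousLinearMap.toLinearMap_pow] at hp hq hclosed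
  have hA := eventually_notMem_spectrum_of_ker_pow_eq_of_range_pow_eq (T - l • 1)
    (Module.End.ker_pow_succ_eq_of_le hp (le_max_left p q))
    (Module.End.range_pow_succ_eq_of_le hq (le_max_right p q)) hclosed
  have hshift : Tendsto (· - l) (𝓝[≠] l) (𝓝[≠] 0) :=
    tendsto_nhdsWithin_of_tendsto_nhds_of_eventually_within _
      (((continuous_sub_right l).tendsto' l 0 (sub_self l)).mono_left nhdsWithin_le_nhds)
      (eventually_nhdsWithin_of_forall fun z hz => sub_ne_zero.2 hz)
  rw [accPt_iff_frequently_nhdsNE, not_frequently]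
  filter_upwards [hshift.eventually hA] with z hz hzT
  have hzl : z - l ∈ spectrum ℂ T - {l} := Set.sub_mem_sub hzT rfl
  rw [spectrum.sub_singleton_eq, Algebra.algebraMap_eq_smul_one] at hzl
  exact hz hzl

end Browder

theorem stmt_17_general [CompleteSpace X] (T : X →L[ℂ] X) (l : ℂ)
    (hle : l ∉ essSpec T)
    (hH : IsClosed (quasinilpotentPart (T.prodMap (dualOp T) - l • 1))) :
    ¬ AccPt l (𝓟 (spectrum ℂ T)) := by
  have hF : IsFredholmOp (T - l • 1) := not_not.1 hle
  rw [ContinuousLinearMap.prodMap_sub_smul_one, ← dualOp_sub_smul_one] at hH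
  have hascent := hF.isBoundedBelowOnFiniteCodim.finiteAscent_of_isClosed_quasinilpotentPart
    (isClosed_quasinilpotentPart_left_of_prodMap hH)
  have hascent_dual :=
    hF.isBoundedBelowOnFiniteCodim_dualOp.finiteAscent_of_isClosed_quasinilpotentPart
      (isClosed_quasinilpotentPart_right_of_prodMap hH)
  have hdescent := finiteDescent_of_finiteAscent_dualOp _
    (fun n => (hF.isBoundedBelowOnFiniteCodim.pow n).isClosed_range) hascent_dual
  exact not_accPt_spectrum_of_notMem_browderSpec (not_not.2 ⟨hF, hascent, hdescent⟩)

/-- If `l ∈ σ(T) \ σₑ(T)` and the quasinilpotent part of `(T ⊕ T*) - l` is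
closed, then `l` is an isolated point of `σ(T)`. -/
theorem stmt_17 [CompleteSpace X] (T : X →L[ℂ] X) (l : ℂ)
    (hl : l ∈ spectrum ℂ T) (hle : l ∉ essSpec T)
    (hH : IsClosed (quasinilpotentPart (T.prodMap (dualOp T) - l • 1))) :
    ¬ AccPt l (𝓟 (spectrum ℂ T)) :=
  stmt_17_general T l hle hH
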